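/- Let k ≥ 1, let G be a k-colorable chordal graph, let T be a clique of G with |T| ≥ k−1, and let v ∈ T. If C^c_k(G,T) is a (k−1,k)-color-complete graph, then C^c_k(G, T∖{v}) is a (k−2,k)-color-complete graph. If C^c_k(G,T) is a forest that satisfies the injective neighborhood property, then C^c_k(G, T∖{v}) is a forest that satisfies the injective neighborhood property. -/

import Mathlib

open SimpleGraph

/-- A proper `k`-coloring of a graph. -/
def IsColoring {W : Type*} (G : SimpleGraph W) (k : ℕ) (α : W → Fin k) : Prop :=
  ∀ u v : W, G.Adj u v → α u ≠ α v

/-- The `k`-color graph `C_k(G)`: nodes are proper `k`-colorings of `G`,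
two colorings being adjacent iff they differ on exactly one vertex. -/
def colorGraph {W : Type*} (G : SimpleGraph W) (k : ℕ) :
    SimpleGraph {α : W → Fin k // IsColoring G k α} where
  Adj α β := ∃! w, α.1 w ≠ β.1 w
  symm := ⟨by
    rintro α β ⟨w, hw, hu⟩
    exact ⟨w, hw.symm, fun u hu' => hu u hu'.symm⟩⟩
  loopless := ⟨by
    rintro α ⟨w, hw, -⟩
    exact hw rfl⟩

/-- The subgraph of a labeled graph consisting of the edges between
equally labeled nodes. -/
def sameLabelSub {N L : Type*} (H : SimpleGraph N) (f : N → L) : SimpleGraph N where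
  Adj x y := H.Adj x y ∧ f x = f y
  symm := ⟨fun _ _ h => ⟨h.1.symm, h.2.symm⟩⟩
  loopless := ⟨fun x h => H.ne_of_adj h.1 rfl⟩

/-- The quotient graph obtained from a labeled graph by contracting every
(maximal) connected set of equally labeled nodes (i.e. every label component)
into a single node. -/
def quotGraph {N L : Type*} (H : SimpleGraph N) (f : N → L) :
    SimpleGraph (sameLabelSub H f).ConnectedComponent where
  Adj c d := c ≠ d ∧ ∃ a b, (sameLabelSub H f).connectedComponentMk a = c ∧
      (sameLabelSub H f).connectedComponentMk b = d ∧ H.Adj a b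
  symm := ⟨by
    rintro c d ⟨hne, a, b, ha, hb, hab⟩
    exact ⟨hne.symm, b, a, hb, ha, hab.symm⟩⟩
  loopless := ⟨fun c h => h.1 rfl⟩

/-- The common label of a label component. -/
def quotLabel {N L : Type*} (H : SimpleGraph N) (f : N → L) :
    (sameLabelSub H f).ConnectedComponent → L :=
  SimpleGraph.ConnectedComponent.lift f (by
    intro v w p hp
    clear hp
    induction p with
    | nil => rfl
    | cons h _ ih => exact (show H.Adj _ _ ∧ f _ = f _ from h).2.trans ih)

/-- The label of a coloring: its restriction to the terminal set `T`. -/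
def csgLabelFun {W : Type*} (G : SimpleGraph W) (k : ℕ) (T : Set W) :
    {α : W → Fin k // IsColoring G k α} → (T → Fin k) :=
  fun α t => α.1 t.1

/-- The node set of the contracted solution graph: the label components. -/
abbrev CSGNode {W : Type*} (G : SimpleGraph W) (k : ℕ) (T : Set W) :=
  (sameLabelSub (colorGraph G k) (csgLabelFun G k T)).ConnectedComponent

/-- The contracted solution graph `C^c_k(G,T)`. -/
def CSG {W : Type*} (G : SimpleGraph W) (k : ℕ) (T : Set W) : SimpleGraph (CSGNode G k T) :=
  quotGraph (colorGraph G k) (csgLabelFun G k T)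

/-- The `γ`-node of the contracted solution graph: the label component containing `γ`. -/
def csgNode {W : Type*} (G : SimpleGraph W) (k : ℕ) (T : Set W)
    (γ : {α : W → Fin k // IsColoring G k α}) : CSGNode G k T :=
  (sameLabelSub (colorGraph G k) (csgLabelFun G k T)).connectedComponentMk γ

/-- The label of a node of the contracted solution graph: the common restriction
to `T` of its colorings. -/
def csgLabel {W : Type*} (G : SimpleGraph W) (k : ℕ) (T : Set W) :
    CSGNode G k T → (T → Fin k) :=
  quotLabel (colorGraph G k) (csgLabelFun G k T)

/-- The restriction of a proper coloring to an induced subgraph. -/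
def restrictColoring {W : Type*} (G : SimpleGraph W) (k : ℕ) (S : Set W)
    (γ : {α : W → Fin k // IsColoring G k α}) :
    {α : S → Fin k // IsColoring (G.induce S) k α} :=
  ⟨fun u => γ.1 u.1, fun u w h => γ.2 u.1 w.1 h⟩

/-- A graph is chordal if it contains no induced cycle of length greater than 3. -/
def Chordal {W : Type*} (G : SimpleGraph W) : Prop :=
  ∀ n : ℕ, 4 ≤ n → IsEmpty (SimpleGraph.cycleGraph n ↪g G)

/-- `S` is a vertex cut: `G - S` is disconnected. -/
def IsVertexCut {W : Type*} (G : SimpleGraph W) (S : Set W) : Prop :=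
  ¬ (G.induce Sᶜ).Preconnected

/-- `G` is `l`-connected. -/
def LConnected {W : Type*} (G : SimpleGraph W) (l : ℕ) : Prop :=
  G.Connected ∧ l + 1 ≤ Nat.card W ∧ ∀ S : Set W, IsVertexCut G S → l ≤ S.ncard

/-- A labeled graph `(H,ℓ)`, whose labels are `k`-colorings of the complete graph
on a vertex (type) `S`, is an `(|S|,k)`-color-complete graph. -/
def IsColorComplete {N S : Type*} (k : ℕ) (H : SimpleGraph N) (ℓ : N → S → Fin k) : Prop :=
  (∀ x, Function.Injective (ℓ x)) ∧
  (∀ f : S → Fin k, Function.Injective f → ∃! x, ℓ x = f) ∧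
  (∀ x y, H.Adj x y ↔ ∃! s, ℓ x s ≠ ℓ y s)

/-- The injective neighborhood property. -/
def INP {N L : Type*} (H : SimpleGraph N) (ℓ : N → L) : Prop :=
  ∀ u v w : N, H.Adj u v → H.Adj u w → v ≠ w → ℓ v ≠ ℓ w

/-- The weight `w(P)` of a walk `P` in a labeled graph: the sum over the vertices `x`
of `P` of the number of colors used by labels of neighbors of `x` in `P` but not by
the label of `x`. -/
noncomputable def walkWeight {N S : Type*} {k : ℕ} {G : SimpleGraph N} (ℓ : N → S → Fin k)
    {a b : N} (P : G.Walk a b) : ℕ :=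
  letI := Classical.decEq N
  ∑ x ∈ P.support.toFinset,
    ((⋃ y ∈ P.toSubgraph.neighborSet x, Set.range (ℓ y)) \ Set.range (ℓ x)).ncard

/-!
Forgetting `v` sends each label component over `T` to the one over `S = T \ {v}` containing it,
and `C^c_k(G,S)` is the contraction of `C^c_k(G,T)` along the fibres of this map, which are
connected. Contracting connected subgraphs of a forest leaves a forest. As `T` is a clique with
`|T| ≥ k - 1`, every label misses at most one color; under the INP this makes each fibre a node
or an edge recoloring `v`, and then two neighbours of a node over `S` with equal labels lift to
two neighbours over `T` with equal labels. For color-completeness, a label over `S` extends by a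
free color at `v` to a node over `T`, and two such extensions are adjacent nodes of one fibre.
-/

open Function

section InjectiveColorings

variable {ι α : Type*} {k : ℕ}

lemma eq_of_forall_ne_eq {a b : ι → α} {i : ι} (h : ∀ t ≠ i, a t = b t) (hi : a i = b i) :
    a = b := by
  funext t
  by_cases ht : t = i
  · rw [ht, hi]
  · exact h t ht

lemma existsUnique_ne_of_forall_ne_eq {a b : ι → α} {i : ι} (h : ∀ t ≠ i, a t = b t)
    (hi : a i ≠ b i) : ∃! t, a t ≠ b t :=
  ⟨i, hi, fun t ht => by_contra fun hti => ht (h t hti)⟩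

lemma apply_notMem_range_of_forall_ne_eq {a b : ι → α} {i : ι} (hb : Injective b)
    (h : ∀ t ≠ i, a t = b t) (hab : a ≠ b) : b i ∉ Set.range a := by
  rintro ⟨t, ht⟩
  by_cases hti : t = i
  · exact hab (eq_of_forall_ne_eq h (hti ▸ ht))
  · exact hti (hb (ht.symm.trans (h t hti))).symm

lemma Fin.exists_notMem_of_ncard_lt {s : Set (Fin k)} (hs : s.ncard < k) : ∃ c, c ∉ s := by
  by_contra! h
  rw [Set.eq_univ_of_forall h, Set.ncard_univ, Nat.card_eq_fintype_card, Fintype.card_fin] at hs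
  exact lt_irrefl k hs

lemma Function.Injective.eq_of_notMem_range [Finite ι] {a : ι → Fin k} (ha : Injective a)
    (hk : k ≤ Nat.card ι + 1) {c d : Fin k} (hc : c ∉ Set.range a) (hd : d ∉ Set.range a) :
    c = d := by
  by_contra hcd
  have hcard := Set.ncard_le_card (insert c (insert d (Set.range a)))
  rw [Set.ncard_insert_of_notMem (by simp [hcd, hc]), Set.ncard_insert_of_notMem hd,
    Set.ncard_range_of_injective ha, Nat.card_fin] at hcard
  omega

/-- If `a i ≠ a' i`, then `b` recolors to `a' i`, the one color `a` misses, and `b'` recolors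
the same point to `a i`; but `b` and `b'` agree there. -/
lemma eq_and_eq_of_existsUnique_ne [Finite ι] {a b a' b' : ι → Fin k} {i : ι}
    (ha : Injective a) (hb : Injective b) (ha' : Injective a') (hb' : Injective b')
    (hk : k ≤ Nat.card ι + 1) (hab : ∃! t, a t ≠ b t) (ha'b' : ∃! t, a' t ≠ b' t)
    (haa' : ∀ t ≠ i, a t = a' t) (hbb' : ∀ t ≠ i, b t = b' t)
    (hab_i : ¬ ∀ t ≠ i, a t = b t) :
    a = a' ∧ b = b' := by
  obtain ⟨s, hs, hsu⟩ := hab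
  have hab_s : ∀ t ≠ s, a t = b t := fun t ht => by_contra fun h => ht (hsu t h)
  have hsi : s ≠ i := by
    rintro rfl
    exact hab_i hab_s
  obtain ⟨s', hs', hs'u⟩ := ha'b'
  have hs's : s' = s := by
    by_contra hss
    have hs'u' : a' s = b' s := by_contra fun h => hss (hs'u s h).symm
    exact hs ((haa' s hsi).trans (hs'u'.trans (hbb' s hsi).symm))
  have ha'b'_s : ∀ t ≠ s, a' t = b' t := fun t ht =>
    by_contra fun h => ht ((hs'u t h).trans hs's)
  have hai : a i = a' i := by
    by_contra hne
    have hba' : b s = a' i := ha.eq_of_notMem_range hk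
      (apply_notMem_range_of_forall_ne_eq hb hab_s fun h => hs (congrFun h s))
      (apply_notMem_range_of_forall_ne_eq ha' haa' fun h => hne (congrFun h i))
    have hb'a : b' s = a i := ha'.eq_of_notMem_range hk
      (apply_notMem_range_of_forall_ne_eq hb' ha'b'_s fun h => hs' (congrFun h s'))
      (apply_notMem_range_of_forall_ne_eq ha (fun t ht => (haa' t ht).symm)
        fun h => hne (congrFun h i).symm)
    exact hne (hb'a.symm.trans ((hbb' s hsi).symm.trans hba'))
  refine ⟨eq_of_forall_ne_eq haa' hai, eq_of_forall_ne_eq hbb' ?_⟩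
  rw [← hab_s i hsi.symm, ← ha'b'_s i hsi.symm, hai]

end InjectiveColorings

section DiffSingleton

variable {V α : Type*} {T : Set V} {v : V}

lemma eq_mk_or_exists_inclusion_eq (hv : v ∈ T) (t : T) :
    t = ⟨v, hv⟩ ∨ ∃ s : ↥(T \ {v}), Set.inclusion Set.sdiff_subset s = t := by
  by_cases h : t.1 = v
  · exact Or.inl (Subtype.ext h)
  · exact Or.inr ⟨⟨t.1, t.2, h⟩, rfl⟩

lemma comp_inclusion_diff_singleton_eq_iff (hv : v ∈ T) {a b : T → α} :
    a ∘ Set.inclusion (Set.sdiff_subset (t := {v})) = b ∘ Set.inclusion Set.sdiff_subset ↔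
      ∀ t ≠ ⟨v, hv⟩, a t = b t := by
  refine ⟨fun h t ht => congrFun h ⟨t.1, t.2, fun htv => ht (Subtype.ext htv)⟩,
    fun h => funext fun s => h _ fun hs => s.2.2 (congrArg Subtype.val hs)⟩

lemma existsUnique_ne_of_comp_inclusion (hv : v ∈ T) {a b : T → α}
    (h : ∃! s : ↥(T \ {v}),
      a (Set.inclusion Set.sdiff_subset s) ≠ b (Set.inclusion Set.sdiff_subset s))
    (hv' : a ⟨v, hv⟩ = b ⟨v, hv⟩) : ∃! t, a t ≠ b t := by
  obtain ⟨s, hs, hsu⟩ := h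
  refine ⟨_, hs, fun t ht => ?_⟩
  rcases eq_mk_or_exists_inclusion_eq hv t with rfl | ⟨s', rfl⟩
  · exact absurd hv' ht
  · rw [hsu s' ht]

open Classical in
noncomputable def extendDiffSingleton (f : ↥(T \ {v}) → α) (c : α) : T → α :=
  fun t => if h : t.1 = v then c else f ⟨t.1, t.2, h⟩

lemma extendDiffSingleton_inclusion (f : ↥(T \ {v}) → α) (c : α) (s : ↥(T \ {v})) :
    extendDiffSingleton f c (Set.inclusion Set.sdiff_subset s) = f s :=
  dif_neg s.2.2

lemma extendDiffSingleton_apply_self (hv : v ∈ T) (f : ↥(T \ {v}) → α) (c : α) :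
    extendDiffSingleton f c ⟨v, hv⟩ = c :=
  dif_pos rfl

lemma extendDiffSingleton_injective {f : ↥(T \ {v}) → α} (hf : Injective f) {c : α}
    (hc : c ∉ Set.range f) : Injective (extendDiffSingleton f c) := by
  intro t t' h
  unfold extendDiffSingleton at h
  split_ifs at h with ht ht'
  · exact Subtype.ext (ht.trans ht'.symm)
  · exact absurd ⟨_, h.symm⟩ hc
  · exact absurd ⟨_, h⟩ hc
  · exact Subtype.ext (congrArg (fun s : ↥(T \ {v}) => (s : V)) (hf h))

end DiffSingleton

namespace SimpleGraph

variable {α β : Type*} {H : SimpleGraph α} {Q : SimpleGraph β}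

/-- Contracting connected fibres of a map preserves acyclicity. -/
theorem IsAcyclic.of_lift_adj {π : α → β} (hH : H.IsAcyclic)
    (hlift : ∀ ⦃X Y⦄, Q.Adj X Y → ∃ x y, H.Adj x y ∧ π x = X ∧ π y = Y)
    (hfiber : ∀ ⦃x y⦄, π x = π y → (sameLabelSub H π).Reachable x y) : Q.IsAcyclic := by
  rw [isAcyclic_iff_forall_adj_isBridge] at hH ⊢
  intro X Y hXY hreach
  obtain ⟨x, y, hxy, rfl, rfl⟩ := hlift hXY
  have hfiber_le : sameLabelSub H π ≤ H.deleteEdges {s(x, y)} := by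
    rintro p q ⟨hpq, hπ⟩
    refine deleteEdges_adj.mpr ⟨hpq, fun he => hXY.ne ?_⟩
    rcases Sym2.eq_iff.mp (Set.mem_singleton_iff.mp he) with ⟨rfl, rfl⟩ | ⟨rfl, rfl⟩
    exacts [hπ, hπ.symm]
  suffices ∀ {X Y} (w : (Q.deleteEdges {s(π x, π y)}).Walk X Y) (a b : α),
      π a = X → π b = Y → (H.deleteEdges {s(x, y)}).Reachable a b from
    let ⟨w⟩ := hreach
    hH hxy (this w x y rfl rfl)
  intro X Y w
  induction w with
  | nil => exact fun a b ha hb => (hfiber (ha.trans hb.symm)).mono hfiber_le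
  | cons hZ _ ih =>
    intro a b ha hb
    obtain ⟨hZ, hZe⟩ := deleteEdges_adj.mp hZ
    obtain ⟨p, q, hpq, rfl, rfl⟩ := hlift hZ
    have hpq' : (H.deleteEdges {s(x, y)}).Adj p q :=
      deleteEdges_adj.mpr ⟨hpq, fun he =>
        hZe (congrArg (Sym2.map π) (Set.mem_singleton_iff.mp he))⟩
    exact ((hfiber ha).mono hfiber_le).trans (hpq'.reachable.trans (ih q b rfl hb))

lemma Reachable.eq_or_adj_of_adj_adj (hH : ∀ ⦃x y z⦄, H.Adj x y → H.Adj y z → x = z)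
    {x y : α} (h : H.Reachable x y) : x = y ∨ H.Adj x y := by
  obtain ⟨w⟩ := h
  induction w with
  | nil => exact Or.inl rfl
  | cons hxy _ ih =>
    rcases ih with rfl | hyz
    · exact Or.inr hxy
    · exact Or.inl (hH hxy hyz)

end SimpleGraph

section ContractedSolutionGraph

variable {V : Type*} {G : SimpleGraph V} {k : ℕ} {S T : Set V}

lemma csgNode_eq_of_adj {γ δ : {α : V → Fin k // IsColoring G k α}}
    (hadj : (colorGraph G k).Adj γ δ) (hlab : csgLabelFun G k T γ = csgLabelFun G k T δ) :
    csgNode G k T γ = csgNode G k T δ :=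
  ConnectedComponent.sound (Adj.reachable ⟨hadj, hlab⟩)

lemma csgLabel_injective (hT : G.IsClique T) (x : CSGNode G k T) :
    Injective (csgLabel G k T x) := by
  induction x using ConnectedComponent.ind with
  | h γ =>
    intro s t hst
    by_contra hne
    exact γ.2 s t (hT s.2 t.2 fun h => hne (Subtype.ext h)) hst

lemma existsUnique_csgLabel_ne_of_adj {x y : CSGNode G k T} (h : (CSG G k T).Adj x y) :
    ∃! t, csgLabel G k T x t ≠ csgLabel G k T y t := by
  obtain ⟨hne, γ, δ, rfl, rfl, w, hw, hwu⟩ := h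
  obtain ⟨t, ht⟩ := Function.ne_iff.mp fun hlab => hne (csgNode_eq_of_adj ⟨w, hw, hwu⟩ hlab)
  exact ⟨t, ht, fun t' ht' => Subtype.ext ((hwu _ ht').trans (hwu _ ht).symm)⟩

lemma csgLabel_ne_of_adj {x y : CSGNode G k T} (h : (CSG G k T).Adj x y) :
    csgLabel G k T x ≠ csgLabel G k T y := fun hxy =>
  (existsUnique_csgLabel_ne_of_adj h).exists.elim fun t ht => ht (congrFun hxy t)

def csgProj (h : S ⊆ T) : CSGNode G k T → CSGNode G k S :=
  ConnectedComponent.lift (csgNode G k S) fun γ δ p hp => by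
    clear hp
    induction p with
    | nil => rfl
    | cons hadj _ ih =>
      exact (csgNode_eq_of_adj hadj.1 (funext fun s => congrFun hadj.2 (Set.inclusion h s))).trans
        ih

variable (h : S ⊆ T)

lemma csgProj_csgNode (γ : {α : V → Fin k // IsColoring G k α}) :
    csgProj h (csgNode G k T γ) = csgNode G k S γ :=
  rfl

lemma csgLabel_csgProj (x : CSGNode G k T) :
    csgLabel G k S (csgProj h x) = csgLabel G k T x ∘ Set.inclusion h := by
  induction x using ConnectedComponent.ind with
  | h γ => rfl

lemma csgProj_surjective : Surjective (csgProj (G := G) (k := k) h) := fun X =>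
  X.ind fun γ => ⟨csgNode G k T γ, rfl⟩

variable {h}

lemma csgProj_adj {x y : CSGNode G k T} (hxy : (CSG G k T).Adj x y)
    (hne : csgProj h x ≠ csgProj h y) : (CSG G k S).Adj (csgProj h x) (csgProj h y) := by
  obtain ⟨-, γ, δ, rfl, rfl, hadj⟩ := hxy
  exact ⟨hne, γ, δ, rfl, rfl, hadj⟩

lemma exists_adj_csgProj_eq {X Y : CSGNode G k S} (hXY : (CSG G k S).Adj X Y) :
    ∃ x y, (CSG G k T).Adj x y ∧ csgProj h x = X ∧ csgProj h y = Y := by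
  obtain ⟨hne, γ, δ, rfl, rfl, hadj⟩ := hXY
  have hγδ : csgNode G k T γ ≠ csgNode G k T δ := fun h' => hne (congrArg (csgProj h) h')
  exact ⟨_, _, ⟨hγδ, γ, δ, rfl, rfl, hadj⟩, rfl, rfl⟩

lemma csgProj_eq_of_adj {x y : CSGNode G k T} (hxy : (CSG G k T).Adj x y)
    (hlab : csgLabel G k S (csgProj h x) = csgLabel G k S (csgProj h y)) :
    csgProj h x = csgProj h y := by
  obtain ⟨-, γ, δ, rfl, rfl, hadj⟩ := hxy
  exact csgNode_eq_of_adj hadj hlab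

lemma reachable_of_csgProj_eq {x y : CSGNode G k T} (hxy : csgProj h x = csgProj h y) :
    (sameLabelSub (CSG G k T) (csgProj h)).Reachable x y := by
  induction x using ConnectedComponent.ind with | h γ =>
  induction y using ConnectedComponent.ind with | h δ =>
  obtain ⟨w⟩ := ConnectedComponent.exact hxy
  clear hxy
  induction w with
  | nil => rfl
  | @cons γ γ' δ hadj _ ih =>
    refine Reachable.trans ?_ ih
    change (sameLabelSub _ _).Reachable (csgNode G k T γ) (csgNode G k T γ')
    by_cases hne : csgNode G k T γ = csgNode G k T γ'
    · rw [hne]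
    · exact Adj.reachable
        ⟨⟨hne, γ, γ', rfl, rfl, hadj.1⟩, csgNode_eq_of_adj hadj.1 hadj.2⟩

theorem isAcyclic_csg_of_subset (hST : S ⊆ T) (hT : (CSG G k T).IsAcyclic) :
    (CSG G k S).IsAcyclic :=
  hT.of_lift_adj (π := csgProj hST) (fun _ _ => exists_adj_csgProj_eq) fun _ _ =>
    reachable_of_csgProj_eq

end ContractedSolutionGraph

section ForgetVertex

variable {V : Type*} {G : SimpleGraph V} {k : ℕ} {T : Set V} {v : V}

lemma csgLabel_csgProj_eq_iff (hv : v ∈ T) {x y : CSGNode G k T} :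
    csgLabel G k (T \ {v}) (csgProj Set.sdiff_subset x) =
        csgLabel G k (T \ {v}) (csgProj Set.sdiff_subset y) ↔
      ∀ t ≠ ⟨v, hv⟩, csgLabel G k T x t = csgLabel G k T y t := by
  rw [csgLabel_csgProj, csgLabel_csgProj, comp_inclusion_diff_singleton_eq_iff hv]

lemma ncard_diff_singleton_lt (hv : v ∈ T) (hTk : T.ncard < k) : (T \ {v}).ncard < k := by
  rw [Set.ncard_sdiff_singleton_of_mem hv]
  omega

lemma csgLabel_diff_singleton_injective (hv : v ∈ T)
    (hcc : IsColorComplete k (CSG G k T) (csgLabel G k T)) :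
    Injective (csgLabel G k (T \ {v})) := by
  intro X₁ X₂ hX
  obtain ⟨x₁, rfl⟩ := csgProj_surjective Set.sdiff_subset X₁
  obtain ⟨x₂, rfl⟩ := csgProj_surjective Set.sdiff_subset X₂
  have hagree := (csgLabel_csgProj_eq_iff hv).mp hX
  by_cases hv' : csgLabel G k T x₁ ⟨v, hv⟩ = csgLabel G k T x₂ ⟨v, hv⟩
  · rw [(hcc.2.1 _ (hcc.1 x₁)).unique rfl (eq_of_forall_ne_eq hagree hv').symm]
  · exact csgProj_eq_of_adj
      ((hcc.2.2 x₁ x₂).mpr (existsUnique_ne_of_forall_ne_eq hagree hv')) hX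

lemma exists_csgProj_csgLabel_eq_extendDiffSingleton
    (hcc : IsColorComplete k (CSG G k T) (csgLabel G k T))
    {f : ↥(T \ {v}) → Fin k} (hf : Injective f) {c : Fin k} (hc : c ∉ Set.range f) :
    ∃ x, csgLabel G k T x = extendDiffSingleton f c ∧
      csgLabel G k (T \ {v}) (csgProj Set.sdiff_subset x) = f := by
  obtain ⟨x, hx, -⟩ := hcc.2.1 _ (extendDiffSingleton_injective hf hc)
  exact ⟨x, hx, by rw [csgLabel_csgProj, hx]; exact funext (extendDiffSingleton_inclusion f c)⟩

lemma existsUnique_csgLabel_diff_singleton_eq (hv : v ∈ T) (hTk : T.ncard < k)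
    (hcc : IsColorComplete k (CSG G k T) (csgLabel G k T))
    {f : ↥(T \ {v}) → Fin k} (hf : Injective f) : ∃! X, csgLabel G k (T \ {v}) X = f := by
  obtain ⟨c, hc⟩ := Fin.exists_notMem_of_ncard_lt (s := Set.range f) (by
    rw [Set.ncard_range_of_injective hf, Nat.card_coe_set_eq]
    exact ncard_diff_singleton_lt hv hTk)
  obtain ⟨x, -, hx⟩ := exists_csgProj_csgLabel_eq_extendDiffSingleton hcc hf hc
  exact ⟨_, hx, fun Y hY => csgLabel_diff_singleton_injective hv hcc (hY.trans hx.symm)⟩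

lemma csg_diff_singleton_adj [Finite V] (hT : G.IsClique T) (hv : v ∈ T) (hTk : T.ncard < k)
    (hcc : IsColorComplete k (CSG G k T) (csgLabel G k T)) {X Y : CSGNode G k (T \ {v})}
    (hXY : ∃! s, csgLabel G k (T \ {v}) X s ≠ csgLabel G k (T \ {v}) Y s) :
    (CSG G k (T \ {v})).Adj X Y := by
  have hinj := csgLabel_injective (G := G) (k := k) (hT.subset (Set.sdiff_subset (t := {v})))
  obtain ⟨s₀, hs₀, hs₀u⟩ := hXY
  obtain ⟨c, hc⟩ := Fin.exists_notMem_of_ncard_lt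
    (s := insert (csgLabel G k (T \ {v}) Y s₀) (Set.range (csgLabel G k (T \ {v}) X))) (by
      have hpos : 0 < T.ncard := (Set.ncard_pos (s := T)).mpr ⟨v, hv⟩
      refine (Set.ncard_insert_le _ _).trans_lt ?_
      rw [Set.ncard_range_of_injective (hinj X), Nat.card_coe_set_eq,
        Set.ncard_sdiff_singleton_of_mem hv]
      omega)
  have hcX : c ∉ Set.range (csgLabel G k (T \ {v}) X) := fun h => hc (Or.inr h)
  have hcY : c ∉ Set.range (csgLabel G k (T \ {v}) Y) := by
    rintro ⟨s, rfl⟩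
    by_cases hs : s = s₀
    · exact hc (Or.inl (hs ▸ rfl))
    · exact hcX ⟨s, by_contra fun h => hs (hs₀u s h)⟩
  obtain ⟨x, hx, hxX⟩ := exists_csgProj_csgLabel_eq_extendDiffSingleton hcc (hinj X) hcX
  obtain ⟨y, hy, hyY⟩ := exists_csgProj_csgLabel_eq_extendDiffSingleton hcc (hinj Y) hcY
  replace hxX := csgLabel_diff_singleton_injective hv hcc hxX
  replace hyY := csgLabel_diff_singleton_injective hv hcc hyY
  have hxy : (CSG G k T).Adj x y := by
    refine (hcc.2.2 x y).mpr (existsUnique_ne_of_comp_inclusion hv ?_ ?_)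
    · simpa only [hx, hy, extendDiffSingleton_inclusion] using ⟨s₀, hs₀, hs₀u⟩
    · rw [hx, hy, extendDiffSingleton_apply_self, extendDiffSingleton_apply_self]
  subst hxX hyY
  exact csgProj_adj hxy fun h => hs₀ (by rw [h])

theorem isColorComplete_csg_diff_singleton [Finite V] (hT : G.IsClique T) (hv : v ∈ T)
    (hTk : T.ncard < k) (hcc : IsColorComplete k (CSG G k T) (csgLabel G k T)) :
    IsColorComplete k (CSG G k (T \ {v})) (csgLabel G k (T \ {v})) :=
  ⟨csgLabel_injective (hT.subset Set.sdiff_subset),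
    fun _ hf => existsUnique_csgLabel_diff_singleton_eq hv hTk hcc hf,
    fun _ _ => ⟨existsUnique_csgLabel_ne_of_adj, csg_diff_singleton_adj hT hv hTk hcc⟩⟩

/-- Both `x` and `z` carry at `v` the one color missing from the label of `y`. -/
lemma eq_of_csgProj_fiber_adj [Finite V] (hT : G.IsClique T) (hv : v ∈ T) (hk : k ≤ T.ncard + 1)
    (hinp : INP (CSG G k T) (csgLabel G k T)) {x y z : CSGNode G k T}
    (hxy : (sameLabelSub (CSG G k T) (csgProj (Set.sdiff_subset (t := {v})))).Adj x y)
    (hyz : (sameLabelSub (CSG G k T) (csgProj (Set.sdiff_subset (t := {v})))).Adj y z) :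
    x = z := by
  have hagree : ∀ {a b},
      (sameLabelSub (CSG G k T) (csgProj (Set.sdiff_subset (t := {v})))).Adj a b →
        ∀ t ≠ ⟨v, hv⟩, csgLabel G k T a t = csgLabel G k T b t :=
    fun hab => (csgLabel_csgProj_eq_iff hv).mp (congrArg _ hab.2)
  by_contra hxz
  have hx := apply_notMem_range_of_forall_ne_eq (csgLabel_injective hT x) (hagree hxy.symm)
    (csgLabel_ne_of_adj hxy.1.symm)
  have hz := apply_notMem_range_of_forall_ne_eq (csgLabel_injective hT z) (hagree hyz)
    (csgLabel_ne_of_adj hyz.1)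
  refine hinp y x z hxy.1.symm hyz.1 hxz (eq_of_forall_ne_eq
    (fun t ht => (hagree hxy t ht).trans (hagree hyz t ht)) ?_)
  exact (csgLabel_injective hT y).eq_of_notMem_range (by rwa [Nat.card_coe_set_eq]) hx hz

theorem inp_csg_diff_singleton [Finite V] (hT : G.IsClique T) (hv : v ∈ T)
    (hk : k ≤ T.ncard + 1) (hinp : INP (CSG G k T) (csgLabel G k T)) :
    INP (CSG G k (T \ {v})) (csgLabel G k (T \ {v})) := by
  intro U X Y hUX hUY hXY hlab
  obtain ⟨u, x, hux, rfl, rfl⟩ := exists_adj_csgProj_eq (h := Set.sdiff_subset) hUX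
  obtain ⟨u', y, hu'y, hu', rfl⟩ := exists_adj_csgProj_eq (h := Set.sdiff_subset) hUY
  have hlabels := eq_and_eq_of_existsUnique_ne (i := ⟨v, hv⟩) (csgLabel_injective hT u)
    (csgLabel_injective hT x) (csgLabel_injective hT u') (csgLabel_injective hT y)
    (by rwa [Nat.card_coe_set_eq]) (existsUnique_csgLabel_ne_of_adj hux)
    (existsUnique_csgLabel_ne_of_adj hu'y) ((csgLabel_csgProj_eq_iff hv).mp (congrArg _ hu'.symm))
    ((csgLabel_csgProj_eq_iff hv).mp hlab)
    fun h => csgLabel_ne_of_adj hUX ((csgLabel_csgProj_eq_iff hv).mpr h)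
  rcases (reachable_of_csgProj_eq hu'.symm).eq_or_adj_of_adj_adj
    (fun _ _ _ => eq_of_csgProj_fiber_adj hT hv hk hinp) with rfl | huu'
  · exact hinp u x y hux hu'y (fun hxy => hXY (congrArg _ hxy)) hlabels.2
  · exact csgLabel_ne_of_adj huu'.1 hlabels.1

end ForgetVertex

theorem statement_11_general {V : Type} [Fintype V] (G : SimpleGraph V) (k : ℕ)
    (T : Set V) (hT : G.IsClique T) (hcard : k - 1 ≤ T.ncard) (v : V) (hv : v ∈ T) :
    ((T.ncard = k - 1 ∧ IsColorComplete k (CSG G k T) (csgLabel G k T)) →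
      ((T \ {v}).ncard = k - 2 ∧
        IsColorComplete k (CSG G k (T \ {v})) (csgLabel G k (T \ {v})))) ∧
    ((IsAcyclic (CSG G k T) ∧ INP (CSG G k T) (csgLabel G k T)) →
      (IsAcyclic (CSG G k (T \ {v})) ∧
        INP (CSG G k (T \ {v})) (csgLabel G k (T \ {v})))) := by
  refine ⟨fun ⟨hTk, hcc⟩ => ?_, fun ⟨hac, hinp⟩ => ?_⟩
  · have hpos : 0 < T.ncard := (Set.ncard_pos (s := T)).mpr ⟨v, hv⟩
    exact ⟨by rw [Set.ncard_sdiff_singleton_of_mem hv]; omega,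
      isColorComplete_csg_diff_singleton hT hv (by omega) hcc⟩
  · exact ⟨isAcyclic_csg_of_subset Set.sdiff_subset hac,
      inp_csg_diff_singleton hT hv (by omega) hinp⟩

/-- the forget operation preserves the invariant: if `C^c_k(G,T)` is a
`(k−1,k)`-color-complete graph then `C^c_k(G, T∖{v})` is a `(k−2,k)`-color-complete
graph, and if `C^c_k(G,T)` is a forest satisfying the INP, then so is
`C^c_k(G, T∖{v})`. -/
theorem statement_11 {V : Type} [Fintype V] [DecidableEq V] (G : SimpleGraph V)
    (k : ℕ) (hk : 1 ≤ k) (hchord : Chordal G)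
    (hcol : ∃ α : V → Fin k, IsColoring G k α)
    (T : Set V) (hT : G.IsClique T) (hcard : k - 1 ≤ T.ncard) (v : V) (hv : v ∈ T) :
    ((T.ncard = k - 1 ∧ IsColorComplete k (CSG G k T) (csgLabel G k T)) →
      ((T \ {v}).ncard = k - 2 ∧
        IsColorComplete k (CSG G k (T \ {v})) (csgLabel G k (T \ {v})))) ∧
    ((IsAcyclic (CSG G k T) ∧ INP (CSG G k T) (csgLabel G k T)) →
      (IsAcyclic (CSG G k (T \ {v})) ∧
        INP (CSG G k (T \ {v})) (csgLabel G k (T \ {v})))) :=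
  statement_11_general G k T hT hcard v hv
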